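/- arXiv:1305.4558 — 6 statements merged into one kernel-verified Lean document; each statement's English description precedes it below -/
import Mathlib

section
/- Let ρ_min = min U. If the stored energy satisfies 0 < e < ρ_min, then ρ_min is an optimal decision at any slot n in the static-channel dynamic program: Vₙ(e,h_i,ρ_min) ≥ Vₙ(e,h_i,ρ) for every ρ ∈ U, where Vₙ(e,h_i,ρ) = g_r(e,ρ) + Σ_j q_{ij} V_{n-1}*((e−ρ)₊ + h_j, h_j). -/
/-- Dynamic programming value function `Vₙ*(e, i)` for the finite-horizon
energy-harvesting throughput maximization problem (static channel). -/
noncomputable def V (g : ℝ → ℝ) {ι : Type} [Fintype ι] (h : ι → ℝ) (q : ι → ι → ℝ)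
    (U : Finset ℝ) (hU : U.Nonempty) : ℕ → ℝ → ι → ℝ
  | 0, _, _ => 0
  | n + 1, e, i => U.sup' hU fun ρ =>
      g ρ * min (e / ρ) 1 + ∑ j, q i j * V g h q U hU n (max (e - ρ) 0 + h j) j

/-- One-step value `Vₙ₊₁(e, i, ρ)` of choosing power `ρ` with `n` further slots remaining. -/
noncomputable def Q (g : ℝ → ℝ) {ι : Type} [Fintype ι] (h : ι → ℝ) (q : ι → ι → ℝ)
    (U : Finset ℝ) (hU : U.Nonempty) (n : ℕ) (i : ι) (e ρ : ℝ) : ℝ :=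
  g ρ * min (e / ρ) 1 + ∑ j, q i j * V g h q U hU n (max (e - ρ) 0 + h j) j

/-!
When `e` lies below every admissible power, any decision `ρ` empties the battery, so the
continuation term of `Q` does not depend on `ρ` and only the immediate throughput
`g ρ * (e / ρ)` matters. For `g` concave with `g 0 = 0` the ratio `g ρ / ρ` decreases in `ρ`,
so the smallest power is best.
-/

open Set

lemma ConcaveOn.antitoneOn_div_of_map_zero {𝕜 : Type*} [Field 𝕜] [LinearOrder 𝕜]
    [IsStrictOrderedRing 𝕜] {g : 𝕜 → 𝕜} (hg : ConcaveOn 𝕜 (Ici 0) g) (hg0 : g 0 = 0) :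
    AntitoneOn (fun x ↦ g x / x) (Ioi 0) := by
  intro a ha b hb hab
  simpa [slope_def_field, hg0] using
    hg.antitoneOn_slope_gt self_mem_Ici ⟨le_of_lt ha, ha⟩ ⟨le_of_lt hb, hb⟩ hab

lemma Q_eq_of_le (g : ℝ → ℝ) {ι : Type} [Fintype ι] (h : ι → ℝ) (q : ι → ι → ℝ)
    (U : Finset ℝ) (hU : U.Nonempty) (n : ℕ) (i : ι) {e ρ : ℝ} (hρ : 0 < ρ) (heρ : e ≤ ρ) :
    Q g h q U hU n i e ρ = g ρ / ρ * e + ∑ j, q i j * V g h q U hU n (h j) j := by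
  rw [Q, min_eq_left ((div_le_one hρ).2 heρ), max_eq_right (sub_nonpos.2 heρ)]
  simp only [zero_add]
  ring

theorem stmt5_general {ι : Type} [Fintype ι] (g : ℝ → ℝ) (hconc : StrictConcaveOn ℝ (Set.Ici 0) g)
    (hg0 : g 0 = 0)
    (h : ι → ℝ)
    (q : ι → ι → ℝ)
    (U : Finset ℝ) (hU : U.Nonempty) (hUpos : ∀ ρ ∈ U, (0:ℝ) < ρ) :
    ∀ (n : ℕ) (i : ι) (e : ℝ), 0 < e → e < U.min' hU →
      ∀ ρ ∈ U, Q g h q U hU n i e ρ ≤ Q g h q U hU n i e (U.min' hU) := by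
  intro n i e he hemin ρ hρ
  have hmin_pos : 0 < U.min' hU := hUpos _ (U.min'_mem hU)
  have hmin_le : U.min' hU ≤ ρ := U.min'_le ρ hρ
  rw [Q_eq_of_le g h q U hU n i (hUpos ρ hρ) (hemin.le.trans hmin_le),
    Q_eq_of_le g h q U hU n i hmin_pos hemin.le]
  gcongr ?_ * e + _
  exact hconc.concaveOn.antitoneOn_div_of_map_zero hg0 hmin_pos (hUpos ρ hρ) hmin_le

theorem stmt5 {ι : Type} [Fintype ι] (g : ℝ → ℝ) (hconc : StrictConcaveOn ℝ (Set.Ici 0) g)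
    (hmono : StrictMonoOn g (Set.Ici 0)) (hg0 : g 0 = 0)
    (h : ι → ℝ) (hh : ∀ j, 0 ≤ h j)
    (q : ι → ι → ℝ) (hq : ∀ i j, 0 ≤ q i j) (hq1 : ∀ i, ∑ j, q i j = 1)
    (U : Finset ℝ) (hU : U.Nonempty) (hUpos : ∀ ρ ∈ U, (0:ℝ) < ρ) :
    ∀ (n : ℕ) (i : ι) (e : ℝ), 0 < e → e < U.min' hU →
      ∀ ρ ∈ U, Q g h q U hU n i e ρ ≤ Q g h q U hU n i e (U.min' hU) :=
  stmt5_general g hconc hg0 h q U hU hUpos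
end

section
/- (Lemma 1) Let ρ, ρ' ∈ U with ρ > ρ', ρ_max = max U, and suppose all harvest values h_j are positive. If e > (n−1)ρ_max + ρ, then Vₙ(e,h_i,ρ) > Vₙ(e,h_i,ρ') for every harvest state h_i, where Vₙ(e,h_i,ρ) = g_r(e,ρ) + Σ_j q_{ij} V_{n-1}*((e−ρ)₊ + h_j, h_j). -/
section Saturation

variable {ι : Type} [Fintype ι] (g : ℝ → ℝ) (h : ι → ℝ) (q : ι → ι → ℝ)
  (U : Finset ℝ) (hU : U.Nonempty)

theorem V_succ_eq_sup'_Q (n : ℕ) (e : ℝ) (i : ι) :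
    V g h q U hU (n + 1) e i = U.sup' hU (Q g h q U hU n i e) :=
  rfl

variable {g h q U}

theorem Q_eq_of_V_saturated (hh : ∀ j, 0 ≤ h j) (hq1 : ∀ i, ∑ j, q i j = 1)
    (hM : 0 ≤ U.max' hU) {n : ℕ} {i : ι} {e ρ : ℝ} (hρ : 0 < ρ) (he : n * U.max' hU + ρ ≤ e)
    (hV : ∀ e' j, n * U.max' hU ≤ e' → V g h q U hU n e' j = n * g (U.max' hU)) :
    Q g h q U hU n i e ρ = g ρ + n * g (U.max' hU) := by
  have hρe : ρ ≤ e := by linarith [mul_nonneg (Nat.cast_nonneg (α := ℝ) n) hM]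
  have hfull : min (e / ρ) 1 = 1 := min_eq_right ((one_le_div hρ).2 hρe)
  have hcont : ∀ j, V g h q U hU n (max (e - ρ) 0 + h j) j = n * g (U.max' hU) := fun j =>
    hV _ j (by linarith [le_max_left (e - ρ) 0, hh j])
  simp only [Q, hfull, hcont, ← Finset.sum_mul, hq1, mul_one, one_mul]

theorem V_eq_of_saturated (hmono : MonotoneOn g (Set.Ici 0)) (hh : ∀ j, 0 ≤ h j)
    (hq1 : ∀ i, ∑ j, q i j = 1) (hUpos : ∀ ρ ∈ U, 0 < ρ) {n : ℕ} :
    ∀ e i, n * U.max' hU ≤ e → V g h q U hU n e i = n * g (U.max' hU) := by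
  have hM : 0 < U.max' hU := hUpos _ (U.max'_mem hU)
  induction n with
  | zero => simp [V]
  | succ n ih =>
    intro e i he
    have hQ : ∀ ρ ∈ U, Q g h q U hU n i e ρ = g ρ + n * g (U.max' hU) := fun ρ hρ =>
      Q_eq_of_V_saturated hU hh hq1 hM.le (hUpos ρ hρ)
        (by push_cast at he; linarith [U.le_max' ρ hρ]) ih
    rw [V_succ_eq_sup'_Q, Nat.cast_succ, add_one_mul, add_comm]
    refine le_antisymm (Finset.sup'_le _ _ fun ρ hρ => ?_) ?_
    · rw [hQ ρ hρ]
      gcongr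
      exact hmono (hUpos ρ hρ).le hM.le (U.le_max' ρ hρ)
    · rw [← hQ _ (U.max'_mem hU)]
      exact U.le_sup' _ (U.max'_mem hU)

end Saturation

theorem stmt6_general {ι : Type} [Fintype ι] (g : ℝ → ℝ)
    (hmono : StrictMonoOn g (Set.Ici 0))
    (h : ι → ℝ) (hh : ∀ j, 0 < h j)
    (q : ι → ι → ℝ) (hq1 : ∀ i, ∑ j, q i j = 1)
    (U : Finset ℝ) (hU : U.Nonempty) (hUpos : ∀ ρ ∈ U, (0:ℝ) < ρ)
    (ρ ρ' : ℝ) (hρU : ρ ∈ U) (hρ'U : ρ' ∈ U) (hlt : ρ' < ρ)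
    (n : ℕ) (i : ι) (e : ℝ) (he : (n : ℝ) * U.max' hU + ρ < e) :
    Q g h q U hU n i e ρ' < Q g h q U hU n i e ρ := by
  have hh₀ : ∀ j, 0 ≤ h j := fun j => (hh j).le
  have hM : 0 ≤ U.max' hU := (hUpos _ (U.max'_mem hU)).le
  have hV := V_eq_of_saturated hU hmono.monotoneOn hh₀ hq1 hUpos (n := n)
  rw [Q_eq_of_V_saturated hU hh₀ hq1 hM (hUpos ρ' hρ'U) (by linarith) hV,
    Q_eq_of_V_saturated hU hh₀ hq1 hM (hUpos ρ hρU) he.le hV]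
  gcongr
  exact hmono (hUpos ρ' hρ'U).le (hUpos ρ hρU).le hlt

theorem stmt6 {ι : Type} [Fintype ι] (g : ℝ → ℝ) (hconc : ConcaveOn ℝ (Set.Ici 0) g)
    (hmono : StrictMonoOn g (Set.Ici 0)) (hg0 : g 0 = 0)
    (h : ι → ℝ) (hh : ∀ j, 0 < h j)
    (q : ι → ι → ℝ) (hq : ∀ i j, 0 ≤ q i j) (hq1 : ∀ i, ∑ j, q i j = 1)
    (U : Finset ℝ) (hU : U.Nonempty) (hUpos : ∀ ρ ∈ U, (0:ℝ) < ρ)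
    (ρ ρ' : ℝ) (hρU : ρ ∈ U) (hρ'U : ρ' ∈ U) (hlt : ρ' < ρ)
    (n : ℕ) (i : ι) (e : ℝ) (he : (n : ℝ) * U.max' hU + ρ < e) :
    Q g h q U hU n i e ρ' < Q g h q U hU n i e ρ :=
  stmt6_general g hmono h hh q hq1 U hU hUpos ρ ρ' hρU hρ'U hlt n i e he
end

section
/- (Lemma 2) Let ρ, ρ' ∈ U with ρ > ρ' > 0. If e ≤ (g(ρ')/g(ρ))·ρ, then Vₙ(e,h_i,ρ) ≤ Vₙ(e,h_i,ρ') for every n ≥ 1 and harvest state h_i, where Vₙ(e,h_i,ρ) = g_r(e,ρ) + Σ_j q_{ij} V_{n-1}*((e−ρ)₊ + h_j, h_j). -/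
/-!
Concavity of `g` with `g 0 = 0` makes the rate per unit of power `g ρ / ρ` antitone in `ρ`.
The immediate reward of the larger power `ρ` is at most `g ρ · e / ρ`, which is therefore at most
`g ρ' · e / ρ'`, and by the hypothesis on `e` also at most `g ρ'`: so it is dominated by the
reward `g ρ' · min (e / ρ') 1` of `ρ'`. The smaller power also leaves at least as much energy in
the battery, and `Vₙ*` is monotone in the energy.
-/

open Finset Set

theorem ConcaveOn.div_le_div_of_le {g : ℝ → ℝ} (hg : ConcaveOn ℝ (Ici 0) g) (hg0 : g 0 = 0)
    {x y : ℝ} (hx : 0 < x) (hxy : x ≤ y) : g y / y ≤ g x / x := by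
  have := hg.antitoneOn_slope_gt self_mem_Ici ⟨hx.le, hx⟩
    ⟨hx.le.trans hxy, hx.trans_le hxy⟩ hxy
  simpa only [slope_def_field, hg0, sub_zero] using this

theorem V_monotone {g : ℝ → ℝ} {ι : Type} [Fintype ι] (h : ι → ℝ) {q : ι → ι → ℝ}
    {U : Finset ℝ} (hU : U.Nonempty) (hg : ∀ σ ∈ U, 0 ≤ g σ) (hUpos : ∀ σ ∈ U, 0 < σ)
    (hq : ∀ i j, 0 ≤ q i j) (n : ℕ) (i : ι) : Monotone fun e => V g h q U hU n e i := by
  induction n generalizing i with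
  | zero => exact fun _ _ _ => le_rfl
  | succ n ih =>
    intro e e' hee
    refine sup'_mono_fun fun σ hσ => add_le_add ?_ (sum_le_sum fun j _ => ?_)
    · exact mul_le_mul_of_nonneg_left
        (min_le_min_right 1 (div_le_div_of_nonneg_right hee (hUpos σ hσ).le)) (hg σ hσ)
    · exact mul_le_mul_of_nonneg_left
        (ih j (add_le_add_left (max_le_max_right 0 (sub_le_sub_right hee σ)) (h j))) (hq i j)

theorem reward_le_of_le_div_mul {g : ℝ → ℝ} (hg : ConcaveOn ℝ (Ici 0) g) (hg0 : g 0 = 0)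
    {ρ ρ' e : ℝ} (hρ' : 0 < ρ') (hle : ρ' ≤ ρ) (hgρ : 0 < g ρ) (he0 : 0 ≤ e)
    (he : e ≤ g ρ' / g ρ * ρ) : g ρ * min (e / ρ) 1 ≤ g ρ' * min (e / ρ') 1 := by
  have hρ : 0 < ρ := hρ'.trans_le hle
  have hslope := hg.div_le_div_of_le hg0 hρ' hle
  have hgρ' : 0 < g ρ' := (div_pos_iff_of_pos_right hρ').mp ((div_pos hgρ hρ).trans_le hslope)
  calc g ρ * min (e / ρ) 1 ≤ g ρ * (e / ρ) := mul_le_mul_of_nonneg_left (min_le_left _ _) hgρ.le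
    _ ≤ min (g ρ' * (e / ρ')) (g ρ' * 1) := by
      refine le_min ?_ ?_
      · calc g ρ * (e / ρ) = e * (g ρ / ρ) := by ring
          _ ≤ e * (g ρ' / ρ') := mul_le_mul_of_nonneg_left hslope he0
          _ = g ρ' * (e / ρ') := by ring
      · calc g ρ * (e / ρ) ≤ g ρ * (g ρ' / g ρ * ρ / ρ) := by gcongr
          _ = g ρ' * 1 := by field_simp
    _ = g ρ' * min (e / ρ') 1 := (mul_min_of_nonneg _ _ hgρ'.le).symm

theorem stmt7_general {ι : Type} [Fintype ι] (g : ℝ → ℝ) (hconc : StrictConcaveOn ℝ (Set.Ici 0) g)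
    (hmono : StrictMonoOn g (Set.Ici 0)) (hg0 : g 0 = 0)
    (h : ι → ℝ)
    (q : ι → ι → ℝ) (hq : ∀ i j, 0 ≤ q i j)
    (U : Finset ℝ) (hU : U.Nonempty) (hUpos : ∀ ρ ∈ U, (0:ℝ) < ρ)
    (ρ ρ' : ℝ) (hρU : ρ ∈ U) (hρ'U : ρ' ∈ U) (hlt : ρ' < ρ)
    (n : ℕ) (i : ι) (e : ℝ) (he0 : 0 ≤ e) (he : e ≤ g ρ' / g ρ * ρ) :
    Q g h q U hU n i e ρ ≤ Q g h q U hU n i e ρ' := by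
  have hgpos : ∀ σ ∈ U, 0 < g σ := fun σ hσ => by
    simpa only [hg0] using hmono self_mem_Ici (hUpos σ hσ).le (hUpos σ hσ)
  have hreward := reward_le_of_le_div_mul hconc.concaveOn hg0 (hUpos ρ' hρ'U) hlt.le
    (hgpos ρ hρU) he0 he
  have hleftover : max (e - ρ) 0 ≤ max (e - ρ') 0 :=
    max_le_max_right 0 (sub_le_sub_left hlt.le e)
  refine add_le_add hreward (sum_le_sum fun j _ => mul_le_mul_of_nonneg_left ?_ (hq i j))
  exact V_monotone h hU (fun σ hσ => (hgpos σ hσ).le) hUpos hq n j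
    (add_le_add_left hleftover (h j))

theorem stmt7 {ι : Type} [Fintype ι] (g : ℝ → ℝ) (hconc : StrictConcaveOn ℝ (Set.Ici 0) g)
    (hmono : StrictMonoOn g (Set.Ici 0)) (hg0 : g 0 = 0)
    (h : ι → ℝ) (hh : ∀ j, 0 ≤ h j)
    (q : ι → ι → ℝ) (hq : ∀ i j, 0 ≤ q i j) (hq1 : ∀ i, ∑ j, q i j = 1)
    (U : Finset ℝ) (hU : U.Nonempty) (hUpos : ∀ ρ ∈ U, (0:ℝ) < ρ)
    (ρ ρ' : ℝ) (hρU : ρ ∈ U) (hρ'U : ρ' ∈ U) (hlt : ρ' < ρ)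
    (n : ℕ) (i : ι) (e : ℝ) (he0 : 0 ≤ e) (he : e ≤ g ρ' / g ρ * ρ) :
    Q g h q U hU n i e ρ ≤ Q g h q U hU n i e ρ' :=
  stmt7_general g hconc hmono hg0 h q hq U hU hUpos ρ ρ' hρU hρ'U hlt n i e he0 he
end

section
/- (Offline dominance) For any sequence of power decisions ρ_N,…,ρ_1 from a set U ⊆ ℝ≥0 and any harvest realization, the total throughput Σ_{n=1}^N g_r(e_n,ρ_n) with e_n = (e_{n+1}−ρ_{n+1})₊ + H_n is at most Σ_{n=1}^N g(ρ̃ₙ*), the throughput of the offline waterfilling solution with real-valued powers, where g is concave increasing with g(0)=0. In particular, for the single-slot case N=1: g(ρ)min(e/ρ,1) ≤ g(min(e,ρ)) for all e,ρ > 0. -/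
/-- The offline optimal ("stretched string") power level with `n` slots remaining,
stored energy `e` and future harvests `H₁, …, H_{n-1}`. -/
noncomputable def rhoStar (n : ℕ) (H : ℕ → ℝ) (e : ℝ) : ℝ :=
  if hne : (Finset.Icc 1 (n - 1)).Nonempty then
    min e ((Finset.Icc 1 (n - 1)).inf' hne fun a =>
      (e + ∑ l ∈ Finset.Icc a (n - 1), H l) / ((n - a + 1 : ℕ) : ℝ))
  else e

/-- Stored energy trajectory of an online schedule `ρseq` (indexed by slot number,
counting backwards from the deadline); `j` steps after the initial slot `N`. -/
noncomputable def eOn (ρseq H : ℕ → ℝ) (N : ℕ) (e0 : ℝ) : ℕ → ℝ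
  | 0 => e0
  | j + 1 => max (eOn ρseq H N e0 j - ρseq (N - j)) 0 + H (N - j - 1)

/-- Stored energy trajectory of the offline waterfilling solution. -/
noncomputable def eOff (H : ℕ → ℝ) (N : ℕ) (e0 : ℝ) : ℕ → ℝ
  | 0 => e0
  | j + 1 => eOff H N e0 j - rhoStar (N - j) H (eOff H N e0 j) + H (N - j - 1)



section
variable (H : ℕ → ℝ)

lemma rhoStar_of_le {n : ℕ} (hn : n ≤ 1) (e : ℝ) : rhoStar n H e = e := by
  have : n - 1 = 0 := by omega
  simp [rhoStar, this]

lemma rhoStar_le_self (n : ℕ) (e : ℝ) : rhoStar n H e ≤ e := by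
  unfold rhoStar
  split
  · exact min_le_left _ _
  · exact le_refl _

lemma rhoStar_le_term {n a : ℕ} (ha : a ∈ Finset.Icc 1 (n - 1)) (e : ℝ) :
    rhoStar n H e ≤ (e + ∑ l ∈ Finset.Icc a (n - 1), H l) / ((n - a + 1 : ℕ) : ℝ) := by
  unfold rhoStar
  rw [dif_pos ⟨a, ha⟩]
  exact le_trans (min_le_right _ _) (Finset.inf'_le _ ha)

lemma rhoStar_cases (n : ℕ) (e : ℝ) : rhoStar n H e = e ∨
    ∃ a ∈ Finset.Icc 1 (n - 1), rhoStar n H e =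
      (e + ∑ l ∈ Finset.Icc a (n - 1), H l) / ((n - a + 1 : ℕ) : ℝ) := by
  by_cases hne : (Finset.Icc 1 (n - 1)).Nonempty
  · obtain ⟨a, ha, hval⟩ := Finset.exists_mem_eq_inf' hne (fun a =>
      (e + ∑ l ∈ Finset.Icc a (n - 1), H l) / ((n - a + 1 : ℕ) : ℝ))
    rw [rhoStar, dif_pos hne]
    rcases le_total e ((Finset.Icc 1 (n - 1)).inf' hne (fun a =>
      (e + ∑ l ∈ Finset.Icc a (n - 1), H l) / ((n - a + 1 : ℕ) : ℝ))) with h | h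
    · exact Or.inl (min_eq_left h)
    · exact Or.inr ⟨a, ha, by rw [min_eq_right h, hval]⟩
  · rw [rhoStar, dif_neg hne]
    exact Or.inl rfl

lemma rhoStar_nonneg (hH : ∀ l, 0 ≤ H l) (n : ℕ) {e : ℝ} (he : 0 ≤ e) :
    0 ≤ rhoStar n H e := by
  rcases rhoStar_cases H n e with h | ⟨a, ha, h⟩
  · rw [h]; exact he
  · rw [h]
    apply div_nonneg
    · exact add_nonneg he (Finset.sum_nonneg fun l _ => hH l)
    · positivity

lemma rhoStar_mono (n : ℕ) {e e' : ℝ} (h : e ≤ e') : rhoStar n H e ≤ rhoStar n H e' := by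
  rcases rhoStar_cases H n e' with h' | ⟨a, ha, h'⟩
  · rw [h']; exact le_trans (rhoStar_le_self H n e) h
  · rw [h']
    refine le_trans (rhoStar_le_term H ha e) ?_
    have hk : (0:ℝ) < ((n - a + 1 : ℕ) : ℝ) := by positivity
    gcongr

lemma rhoStar_lip (n : ℕ) {e δ : ℝ} (hδ : 0 ≤ δ) :
    rhoStar n H (e + δ) ≤ rhoStar n H e + δ := by
  rcases rhoStar_cases H n e with h | ⟨a, ha, h⟩
  · rw [h]; exact rhoStar_le_self H n (e + δ)
  · rw [h]
    refine le_trans (rhoStar_le_term H ha (e + δ)) ?_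
    have hk : (1:ℝ) ≤ ((n - a + 1 : ℕ) : ℝ) := by
      have : 1 ≤ n - a + 1 := by omega
      exact_mod_cast this
    calc (e + δ + ∑ l ∈ Finset.Icc a (n - 1), H l) / ((n - a + 1 : ℕ) : ℝ)
        = (e + ∑ l ∈ Finset.Icc a (n - 1), H l) / ((n - a + 1 : ℕ) : ℝ)
          + δ / ((n - a + 1 : ℕ) : ℝ) := by rw [← add_div]; ring_nf
      _ ≤ _ := by
          have := div_le_self hδ hk
          linarith
end

lemma cast_den {m a : ℕ} (h : a ≤ m) : ((m - a + 1 : ℕ) : ℝ) = (m:ℝ) - a + 1 := by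
  push_cast [h]
  ring

lemma succ_sub_one' (n : ℕ) : n + 1 - 1 = n := rfl

lemma levelMono (hH : ∀ l, 0 ≤ H l) (n : ℕ) {e : ℝ} (he : 0 ≤ e) :
    rhoStar (n+2) H e ≤ rhoStar (n+1) H (e - rhoStar (n+2) H e + H (n+1)) := by
  set ρ := rhoStar (n+2) H e with hρdef
  have hFtop : ρ ≤ (e + H (n+1)) / 2 := by
    have ha : n + 1 ∈ Finset.Icc 1 ((n+2) - 1) := by
      simp [Finset.mem_Icc]
    have := rhoStar_le_term H ha e
    simpa [Finset.Icc_self, show n + 2 - (n+1) + 1 = 2 by omega] using this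
  rcases rhoStar_cases H (n+1) (e - ρ + H (n+1)) with h | ⟨a, ha, h⟩
  · rw [h]; linarith
  · rw [h]
    simp only [succ_sub_one'] at ha ⊢
    have ha' : 1 ≤ a ∧ a ≤ n := by simpa [Finset.mem_Icc] using ha
    have haIcc : a ∈ Finset.Icc 1 ((n+2) - 1) := by
      simp [Finset.mem_Icc]; omega
    have hF := rhoStar_le_term H haIcc e
    simp only [succ_sub_one'] at hF
    have hsum : ∑ l ∈ Finset.Icc a (n+1), H l
        = (∑ l ∈ Finset.Icc a n, H l) + H (n+1) :=
      Finset.sum_Icc_succ_top (by omega) H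
    have hd1 : ((n + 1 - a + 1 : ℕ) : ℝ) = (n:ℝ) - a + 2 := by
      rw [cast_den (by omega)]; push_cast; ring
    have hd2 : ((n + 2 - a + 1 : ℕ) : ℝ) = (n:ℝ) - a + 3 := by
      rw [cast_den (by omega)]; push_cast; ring
    have hapos : (a:ℝ) ≤ n := by exact_mod_cast ha'.2
    rw [hd2, hsum] at hF
    rw [hd1]
    rw [le_div_iff₀ (by linarith)] at hF
    rw [le_div_iff₀ (by linarith)]
    linarith

lemma levelDrop (hH : ∀ l, 0 ≤ H l) (n : ℕ) {e c : ℝ} (he : 0 ≤ e)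
    (hc1 : rhoStar (n+2) H e ≤ c) (hc2 : c ≤ e) :
    rhoStar (n+2) H e = e ∨
      rhoStar (n+1) H (e - c + H (n+1)) ≤ rhoStar (n+2) H e := by
  rcases rhoStar_cases H (n+2) e with h | ⟨a, ha, h⟩
  · exact Or.inl h
  · right
    set ρ := rhoStar (n+2) H e with hρdef
    have ha' : 1 ≤ a ∧ a ≤ n + 1 := by simpa [Finset.mem_Icc] using ha
    rcases Nat.lt_or_ge a (n+1) with hlt | hge
    · -- a ≤ n
      have haIcc : a ∈ Finset.Icc 1 ((n+1) - 1) := by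
        simp [Finset.mem_Icc]; omega
      have hT := rhoStar_le_term H haIcc (e - c + H (n+1))
      simp only [succ_sub_one'] at hT h
      have hsum : ∑ l ∈ Finset.Icc a (n+1), H l
          = (∑ l ∈ Finset.Icc a n, H l) + H (n+1) :=
        Finset.sum_Icc_succ_top (by omega) H
      have hd1 : ((n + 1 - a + 1 : ℕ) : ℝ) = (n:ℝ) - a + 2 := by
        rw [cast_den (by omega)]; push_cast; ring
      have hd2 : ((n + 2 - a + 1 : ℕ) : ℝ) = (n:ℝ) - a + 3 := by
        rw [cast_den (by omega)]; push_cast; ring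
      have hapos : (a:ℝ) ≤ n := by
        have : a ≤ n := by omega
        exact_mod_cast this
      rw [hd2, hsum, eq_div_iff (by linarith)] at h
      refine le_trans hT ?_
      rw [hd1, div_le_iff₀ (by linarith)]
      linarith
    · -- a = n + 1
      have haeq : a = n + 1 := by omega
      subst haeq
      simp only [succ_sub_one'] at h
      rw [Finset.Icc_self, Finset.sum_singleton,
        show n + 2 - (n+1) + 1 = 2 by omega] at h
      push_cast at h
      rw [eq_div_iff (two_ne_zero)] at h
      refine le_trans (rhoStar_le_self H _ _) ?_
      linarith

section Concave
variable {g : ℝ → ℝ}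

lemma secant_bound (hconc : ConcaveOn ℝ (Set.Ici 0) g) {a b u v : ℝ}
    (ha : 0 ≤ a) (hab : a < b) (hbu : b ≤ u) (huv : u < v) :
    (g v - g u) / (v - u) ≤ (g b - g a) / (b - a) := by
  rcases eq_or_lt_of_le hbu with rfl | hbu
  · exact hconc.slope_anti_adjacent ha (by simp [Set.mem_Ici]; linarith) hab huv
  · have s1 := hconc.slope_anti_adjacent (x := b) (z := v)
      (by simp [Set.mem_Ici]; linarith) (by simp [Set.mem_Ici]; linarith) hbu huv
    have s2 := hconc.slope_anti_adjacent (x := a) (z := u)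
      (by simp [Set.mem_Ici]; linarith) (by simp [Set.mem_Ici]; linarith) hab hbu
    exact le_trans s1 s2

lemma slope_form (hconc : ConcaveOn ℝ (Set.Ici 0) g) {a b : ℝ}
    (ha : 0 ≤ a) (hab : a < b) {u v : ℝ} (hu : b ≤ u) (huv : u ≤ v) :
    g v - g u ≤ (g b - g a) / (b - a) * (v - u) := by
  rcases eq_or_lt_of_le huv with rfl | huv
  · simp
  · have := secant_bound hconc ha hab hu huv
    rw [div_le_div_iff₀ (by linarith) (by linarith)] at this
    have hba : (0:ℝ) < b - a := by linarith
    rw [div_mul_eq_mul_div, le_div_iff₀ hba]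
    linarith

lemma increment_anti (hconc : ConcaveOn ℝ (Set.Ici 0) g) {u ρ δ : ℝ}
    (hu : 0 ≤ u) (huρ : u ≤ ρ) (hδ : 0 ≤ δ) :
    g (ρ + δ) - g ρ ≤ g (u + δ) - g u := by
  set D := ρ + δ - u with hD
  rcases eq_or_lt_of_le (show 0 ≤ D by simp [hD]; linarith) with hD0 | hD0
  · have h1 : δ = 0 := by simp [hD] at hD0; linarith
    have h2 : u = ρ := by simp [hD] at hD0; linarith
    simp [h1, h2]
  · set t := δ / D with ht
    set s := (ρ - u) / D with hs
    have hts : t + s = 1 := by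
      rw [ht, hs, ← add_div, hD]
      rw [div_eq_one_iff_eq (ne_of_gt (by linarith))]
      ring
    have ht0 : 0 ≤ t := div_nonneg hδ (by linarith)
    have hs0 : 0 ≤ s := div_nonneg (by linarith) (by linarith)
    have htD : t * D = δ := by rw [ht]; field_simp
    have hsD : s * D = ρ - u := by rw [hs]; field_simp
    have hmem1 : u ∈ Set.Ici (0:ℝ) := hu
    have hmem2 : ρ + δ ∈ Set.Ici (0:ℝ) := by simp [Set.mem_Ici]; linarith
    have h1 := hconc.2 hmem1 hmem2 hs0 ht0 (by linarith)
    have h2 := hconc.2 hmem1 hmem2 ht0 hs0 hts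
    simp only [smul_eq_mul] at h1 h2
    have e1 : s * u + t * (ρ + δ) = u + δ := by nlinarith [htD, hsD]
    have e2 : t * u + s * (ρ + δ) = ρ := by nlinarith [htD, hsD]
    rw [e1] at h1
    rw [e2] at h2
    have hsum := add_le_add h1 h2
    have hre : s * g u + t * g (ρ + δ) + (t * g u + s * g (ρ + δ))
        = (t + s) * (g u + g (ρ + δ)) := by ring
    rw [hre, hts, one_mul] at hsum
    linarith

end Concave

noncomputable def TT (g : ℝ → ℝ) (H : ℕ → ℝ) : ℕ → ℝ → ℝ
  | 0, _ => 0
  | n+1, e => g (rhoStar (n+1) H e) + TT g H n (e - rhoStar (n+1) H e + H n)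

lemma TT_succ (g : ℝ → ℝ) (H : ℕ → ℝ) (n : ℕ) (e : ℝ) :
    TT g H (n+1) e = g (rhoStar (n+1) H e) + TT g H n (e - rhoStar (n+1) H e + H n) := rfl

lemma TT_add_le {g : ℝ → ℝ} (hconc : ConcaveOn ℝ (Set.Ici 0) g)
    (hmono : MonotoneOn g (Set.Ici 0)) (hH : ∀ l, 0 ≤ H l) :
    ∀ n : ℕ, ∀ x δ b σ : ℝ, 0 ≤ x → 0 ≤ δ → 0 ≤ b →
    (∀ u v : ℝ, b ≤ u → u ≤ v → g v - g u ≤ σ * (v - u)) →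
    (1 ≤ n → b ≤ rhoStar n H x) →
    TT g H n (x + δ) ≤ TT g H n x + σ * δ := by
  intro n
  induction n with
  | zero =>
    intro x δ b σ hx hδ hb hslope _
    have h1 := hslope b (b+1) le_rfl (by linarith)
    have h2 : g b ≤ g (b+1) := hmono (Set.mem_Ici.mpr hb)
      (Set.mem_Ici.mpr (by linarith)) (by linarith)
    have hσ : 0 ≤ σ := by nlinarith
    show (0:ℝ) ≤ 0 + σ * δ
    positivity
  | succ n ih =>
    intro x δ b σ hx hδ hb hslope hguard
    have hw := hguard (Nat.succ_le_succ (Nat.zero_le n))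
    set w := rhoStar (n+1) H x with hwdef
    set w' := rhoStar (n+1) H (x + δ) with hw'def
    have hmw : w ≤ w' := rhoStar_mono H (n+1) (by linarith)
    have hlip : w' ≤ w + δ := rhoStar_lip H (n+1) hδ
    have hwx : w ≤ x := rhoStar_le_self H (n+1) x
    have hy : 0 ≤ x - w + H n := by have := hH n; linarith
    have step1 : g w' - g w ≤ σ * (w' - w) := hslope w w' hw hmw
    have step2 : TT g H n ((x - w + H n) + (δ - (w' - w)))
        ≤ TT g H n (x - w + H n) + σ * (δ - (w' - w)) := by
      apply ih _ _ b σ hy (by linarith) hb hslope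
      intro hn1
      obtain ⟨m, rfl⟩ : ∃ m, n = m + 1 := ⟨n - 1, by omega⟩
      rw [hwdef]
      exact le_trans hw (levelMono hH m hx)
    have harg : (x + δ) - w' + H n = (x - w + H n) + (δ - (w' - w)) := by ring
    rw [TT_succ, TT_succ, ← hwdef, ← hw'def, harg]
    nlinarith [step1, step2]

lemma bellman {g : ℝ → ℝ} (hconc : ConcaveOn ℝ (Set.Ici 0) g)
    (hmono : MonotoneOn g (Set.Ici 0)) (hH : ∀ l, 0 ≤ H l) :
    ∀ n : ℕ, ∀ e c : ℝ, 0 ≤ e → 0 ≤ c → c ≤ e →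
    g c + TT g H n (e - c + H n) ≤ TT g H (n+1) e := by
  intro n
  induction n with
  | zero =>
    intro e c he hc hce
    rw [TT_succ, rhoStar_of_le H le_rfl]
    show g c + 0 ≤ g e + 0
    have := hmono (Set.mem_Ici.mpr hc) (Set.mem_Ici.mpr he) hce
    linarith
  | succ n ih =>
    intro e c he hc hce
    set ρ := rhoStar (n+2) H e with hρdef
    have hunf : TT g H (n+1+1) e = g ρ + TT g H (n+1) (e - ρ + H (n+1)) := by
      rw [TT_succ g H (n+1) e, ← hρdef]
    have hρe : ρ ≤ e := rhoStar_le_self H (n+2) e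
    have hρ0 : 0 ≤ ρ := rhoStar_nonneg H hH (n+2) he
    rcases lt_trichotomy c ρ with hlt | heq | hgt
    · -- c < ρ : use the marginal upper bound
      set σ := (g ρ - g c) / (ρ - c) with hσdef
      have hslope : ∀ u v : ℝ, ρ ≤ u → u ≤ v → g v - g u ≤ σ * (v - u) :=
        fun u v hu huv => slope_form hconc hc hlt hu huv
      have hx : (0:ℝ) ≤ e - ρ + H (n+1) := by have := hH (n+1); linarith
      have hQ := TT_add_le hconc hmono hH (n+1) (e - ρ + H (n+1)) (ρ - c) ρ σ
        hx (by linarith) hρ0 hslope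
        (fun _ => levelMono hH n he)
      have harg : e - ρ + H (n+1) + (ρ - c) = e - c + H (n+1) := by ring
      rw [harg] at hQ
      have hσm : σ * (ρ - c) = g ρ - g c := by
        rw [hσdef, div_mul_cancel₀ _ (sub_ne_zero.mpr (ne_of_gt hlt))]
      rw [hσm] at hQ
      rw [hunf]
      linarith
    · rw [heq, hunf]
    · -- ρ < c : use feasibility of (u + δ) in the offline problem
      have he' : (0:ℝ) ≤ e - c + H (n+1) := by have := hH (n+1); linarith
      set u := rhoStar (n+1) H (e - c + H (n+1)) with hudef
      have hu0 : 0 ≤ u := rhoStar_nonneg H hH _ he'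
      have hue : u ≤ e - c + H (n+1) := rhoStar_le_self H _ _
      have huρ : u ≤ ρ := by
        rcases levelDrop hH n he (le_of_lt hgt) hce with h | h
        · exfalso; rw [← hρdef] at h; linarith
        · exact h
      have hP := ih (e - ρ + H (n+1)) (u + (c - ρ))
        (by have := hH (n+1); linarith) (by linarith) (by linarith)
      have harg : e - ρ + H (n+1) - (u + (c - ρ)) + H n
          = e - c + H (n+1) - u + H n := by ring
      rw [harg] at hP
      have hTT' : TT g H (n+1) (e - c + H (n+1))
          = g u + TT g H n (e - c + H (n+1) - u + H n) := by
        rw [TT_succ, ← hudef]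
      have hinc : g (ρ + (c - ρ)) - g ρ ≤ g (u + (c - ρ)) - g u :=
        increment_anti hconc hu0 huρ (by linarith)
      rw [show ρ + (c - ρ) = c by ring] at hinc
      rw [hTT', hunf]
      linarith


lemma eOff_shift (N : ℕ) (e : ℝ) :
    ∀ j, eOff H (N+1) e (j+1) = eOff H N (e - rhoStar (N+1) H e + H N) j := by
  intro j
  induction j with
  | zero =>
    show eOff H (N+1) e 0 - rhoStar (N+1-0) H (eOff H (N+1) e 0) + H (N+1-0-1) = _
    simp [eOff]
  | succ j ihj =>
    show eOff H (N+1) e (j+1) - rhoStar (N+1-(j+1)) H (eOff H (N+1) e (j+1))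
        + H (N+1-(j+1)-1) = _
    rw [ihj, Nat.succ_sub_succ]
    rfl

lemma eOn_shift (ρseq : ℕ → ℝ) (N : ℕ) (e : ℝ) :
    ∀ j, eOn ρseq H (N+1) e (j+1)
      = eOn ρseq H N (max (e - ρseq (N+1)) 0 + H N) j := by
  intro j
  induction j with
  | zero =>
    show max (eOn ρseq H (N+1) e 0 - ρseq (N+1-0)) 0 + H (N+1-0-1) = _
    simp [eOn]
  | succ j ihj =>
    show max (eOn ρseq H (N+1) e (j+1) - ρseq (N+1-(j+1))) 0 + H (N+1-(j+1)-1) = _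
    rw [ihj, Nat.succ_sub_succ]
    rfl

lemma offline_sum (g : ℝ → ℝ) :
    ∀ N : ℕ, ∀ e : ℝ,
      ∑ j ∈ Finset.range N, g (rhoStar (N - j) H (eOff H N e j)) = TT g H N e := by
  intro N
  induction N with
  | zero => intro e; simp [TT]
  | succ N ihN =>
    intro e
    rw [Finset.sum_range_succ']
    have h0 : g (rhoStar (N + 1 - 0) H (eOff H (N+1) e 0)) = g (rhoStar (N+1) H e) := by
      simp [eOff]
    rw [h0]
    have hsh : ∀ j, g (rhoStar (N + 1 - (j+1)) H (eOff H (N+1) e (j+1)))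
        = g (rhoStar (N - j) H (eOff H N (e - rhoStar (N+1) H e + H N) j)) := by
      intro j
      rw [eOff_shift, Nat.succ_sub_succ]
    rw [Finset.sum_congr rfl (fun j _ => hsh j), ihN, TT_succ]
    ring

lemma single_slot {g : ℝ → ℝ} (hconc : ConcaveOn ℝ (Set.Ici 0) g)
    (hmono : MonotoneOn g (Set.Ici 0)) (hg0 : g 0 = 0)
    {e ρ : ℝ} (he : 0 ≤ e) (hρ : 0 ≤ ρ) :
    g ρ * min (e / ρ) 1 ≤ g (min e ρ) := by
  rcases eq_or_lt_of_le hρ with rfl | hρ0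
  · simp [hg0, min_eq_right he]
  · rcases le_total ρ e with h | h
    · rw [min_eq_right ((one_le_div hρ0).mpr h), min_eq_right h, mul_one]
    · have ht1 : e / ρ ≤ 1 := (div_le_one hρ0).mpr h
      rw [min_eq_left ht1, min_eq_left h]
      have ht0 : 0 ≤ e / ρ := div_nonneg he (le_of_lt hρ0)
      have hcomb := hconc.2 (Set.mem_Ici.mpr (le_of_lt hρ0)) (Set.mem_Ici.mpr le_rfl)
        ht0 (by linarith : (0:ℝ) ≤ 1 - e / ρ) (by ring)
      simp only [smul_eq_mul, mul_zero, add_zero, hg0] at hcomb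
      rw [div_mul_cancel₀ _ (ne_of_gt hρ0)] at hcomb
      linarith [hcomb]

lemma online_le {g : ℝ → ℝ} (hconc : ConcaveOn ℝ (Set.Ici 0) g)
    (hmono : MonotoneOn g (Set.Ici 0)) (hg0 : g 0 = 0)
    (hH : ∀ l, 0 ≤ H l) (ρseq : ℕ → ℝ) (hρ : ∀ k, 0 ≤ ρseq k) :
    ∀ N : ℕ, ∀ e : ℝ, 0 ≤ e →
    ∑ j ∈ Finset.range N, g (ρseq (N - j)) * min (eOn ρseq H N e j / ρseq (N - j)) 1
      ≤ TT g H N e := by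
  intro N
  induction N with
  | zero => intro e he; simp [TT]
  | succ N ihN =>
    intro e he
    rw [Finset.sum_range_succ']
    set ρ := ρseq (N+1) with hρdef
    have hterm0 : g (ρseq (N + 1 - 0)) * min (eOn ρseq H (N+1) e 0 / ρseq (N + 1 - 0)) 1
        = g ρ * min (e / ρ) 1 := by simp [eOn, hρdef]
    have hsh : ∀ j, g (ρseq (N + 1 - (j+1)))
          * min (eOn ρseq H (N+1) e (j+1) / ρseq (N + 1 - (j+1))) 1
        = g (ρseq (N - j))
          * min (eOn ρseq H N (max (e - ρ) 0 + H N) j / ρseq (N - j)) 1 := by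
      intro j
      rw [eOn_shift, Nat.succ_sub_succ]
    rw [hterm0, Finset.sum_congr rfl (fun j _ => hsh j)]
    have he1 : 0 ≤ max (e - ρ) 0 + H N := by
      have := hH N
      have := le_max_right (e - ρ) 0
      linarith
    have hIH := ihN (max (e - ρ) 0 + H N) he1
    set c := min e ρ with hcdef
    have hc0 : 0 ≤ c := le_min he (hρ (N+1))
    have hce : c ≤ e := min_le_left _ _
    have hmax : max (e - ρ) 0 = e - c := by
      rcases le_total e ρ with h | h
      · rw [hcdef, min_eq_left h, max_eq_right (by linarith)]; ring
      · rw [hcdef, min_eq_right h, max_eq_left (by linarith)]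
    have hsingle := single_slot hconc hmono hg0 he (hρ (N+1))
    have hbell := bellman hconc hmono hH N e c he hc0 hce
    rw [hmax] at hIH ⊢
    calc (∑ j ∈ Finset.range N, g (ρseq (N - j))
            * min (eOn ρseq H N (e - c + H N) j / ρseq (N - j)) 1) + g ρ * min (e / ρ) 1
        ≤ TT g H N (e - c + H N) + g c := by
          rw [hcdef]
          exact add_le_add hIH hsingle
      _ ≤ TT g H (N+1) e := by linarith [hbell]

theorem stmt12 (g : ℝ → ℝ) (hconc : ConcaveOn ℝ (Set.Ici 0) g)
    (hmono : MonotoneOn g (Set.Ici 0)) (hg0 : g 0 = 0)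
    (N : ℕ) (e0 : ℝ) (he0 : 0 ≤ e0) (H : ℕ → ℝ) (hH : ∀ l, 0 ≤ H l)
    (ρseq : ℕ → ℝ) (hρ : ∀ k, 0 ≤ ρseq k) :
    (∑ j ∈ Finset.range N, g (ρseq (N - j)) * min (eOn ρseq H N e0 j / ρseq (N - j)) 1 ≤
      ∑ j ∈ Finset.range N, g (rhoStar (N - j) H (eOff H N e0 j))) ∧
    ∀ e ρ : ℝ, 0 < e → 0 < ρ → g ρ * min (e / ρ) 1 ≤ g (min e ρ) := by
  constructor
  · rw [offline_sum g N e0]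
    exact online_le hconc hmono hg0 hH ρseq hρ N e0 he0
  · intro e ρ he hρ'
    exact single_slot hconc hmono hg0 he.le hρ'.le
end

section
/- (Water level characterization) Fix n ≥ 1, channel gains γ_1,…,γ_n > 0, harvests H_1,…,H_{n-1} ≥ 0 and stored energy e ≥ 0. Suppose w ≥ 0 satisfies the constraints Σ_{k=a}^{n} (w − 1/γ_k)₊ ≤ e + Σ_{k=a}^{n-1} H_k for all a ∈ {1,…,n−1} together with w ≤ e + 1/γ_n. Then w satisfies w ≤ min_{a∈{1,…,n}} [ e + 1/γ_n + Σ_{k=a}^{n-1}(H_k + 1/γ_k) − Σ_{k=a}^{n}(1/γ_k − w)₊ ] / (n−a+1). -/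
/-!
Writing `(w - c)₊ = w - c + (c - w)₊` and summing over `k = a, …, n` turns the `a`-th bound on `w`
into the `a`-th energy constraint `∑ (w - 1/γ k)₊ ≤ e + ∑ H k`. For `a = n` that constraint reads
`(w - 1/γ n)₊ ≤ e`, which is `w ≤ e + 1/γ n` together with `0 ≤ e`.
-/

open Finset

lemma sum_max_sub_zero_eq {ι : Type*} (s : Finset ι) (c : ι → ℝ) (w : ℝ) :
    ∑ k ∈ s, max (w - c k) 0 = #s * w - ∑ k ∈ s, c k + ∑ k ∈ s, max (c k - w) 0 := by
  have hsplit (k : ι) : max (w - c k) 0 = w - c k + max (c k - w) 0 := by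
    have h := max_zero_sub_max_neg_zero_eq_self (w - c k)
    rw [neg_sub] at h
    linarith
  rw [sum_congr rfl fun k _ => hsplit k, sum_add_distrib, sum_sub_distrib, sum_const,
    nsmul_eq_mul]

lemma le_div_iff_sum_max_sub_zero_le (m a : ℕ) (ha : a ≤ m + 1) (c H : ℕ → ℝ) (e w : ℝ) :
    w ≤ (e + c (m + 1) + ∑ k ∈ Icc a m, (H k + c k) - ∑ k ∈ Icc a (m + 1), max (c k - w) 0) /
        ((m + 1 - a + 1 : ℕ) : ℝ) ↔
      ∑ k ∈ Icc a (m + 1), max (w - c k) 0 ≤ e + ∑ k ∈ Icc a m, H k := by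
  have hcard : (#(Icc a (m + 1)) : ℝ) = ((m + 1 - a + 1 : ℕ) : ℝ) := by
    rw [Nat.card_Icc, Nat.sub_add_comm ha]
  rw [le_div_iff₀ (by positivity), sum_max_sub_zero_eq, hcard]
  simp only [sum_Icc_succ_top ha, sum_add_distrib]
  constructor <;> intro h <;> linarith

theorem stmt17_general (n : ℕ) (hn : 1 ≤ n) (γ : ℕ → ℝ)
    (H : ℕ → ℝ) (e : ℝ) (he : 0 ≤ e) (w : ℝ)
    (hcon : ∀ a ∈ Finset.Icc 1 (n - 1),
      ∑ k ∈ Finset.Icc a n, max (w - 1 / γ k) 0 ≤ e + ∑ k ∈ Finset.Icc a (n - 1), H k)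
    (hlast : w ≤ e + 1 / γ n) :
    w ≤ (Finset.Icc 1 n).inf' (Finset.nonempty_Icc.mpr hn) (fun a =>
      (e + 1 / γ n + ∑ k ∈ Finset.Icc a (n - 1), (H k + 1 / γ k) -
        ∑ k ∈ Finset.Icc a n, max (1 / γ k - w) 0) / ((n - a + 1 : ℕ) : ℝ)) := by
  obtain ⟨m, rfl⟩ := Nat.exists_eq_add_of_le' hn
  refine le_inf' _ _ fun a ha => ?_
  obtain ⟨ha1, ham⟩ := mem_Icc.mp ha
  simp only [Nat.add_sub_cancel] at hcon ⊢
  refine (le_div_iff_sum_max_sub_zero_le m a ham (fun k => 1 / γ k) H e w).mpr ?_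
  rcases ham.lt_or_eq with hlt | rfl
  · exact hcon a (mem_Icc.mpr ⟨ha1, by omega⟩)
  · simpa [Icc_self] using max_le (sub_le_iff_le_add.mpr hlast) he

theorem stmt17 (n : ℕ) (hn : 1 ≤ n) (γ : ℕ → ℝ) (hγ : ∀ k, 0 < γ k)
    (H : ℕ → ℝ) (hH : ∀ k, 0 ≤ H k) (e : ℝ) (he : 0 ≤ e) (w : ℝ) (hw : 0 ≤ w)
    (hcon : ∀ a ∈ Finset.Icc 1 (n - 1),
      ∑ k ∈ Finset.Icc a n, max (w - 1 / γ k) 0 ≤ e + ∑ k ∈ Finset.Icc a (n - 1), H k)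
    (hlast : w ≤ e + 1 / γ n) :
    w ≤ (Finset.Icc 1 n).inf' (Finset.nonempty_Icc.mpr hn) (fun a =>
      (e + 1 / γ n + ∑ k ∈ Finset.Icc a (n - 1), (H k + 1 / γ k) -
        ∑ k ∈ Finset.Icc a n, max (1 / γ k - w) 0) / ((n - a + 1 : ℕ) : ℝ)) :=
  stmt17_general n hn γ H e he w hcon hlast
end

section
/- For any finite increasing sequence of positive powers ρ_1 < ρ_2 < … < ρ_K and g strictly concave increasing with g(0)=0, the single-slot optimal value V₁*(e) = max_{1≤m≤K} g(ρ_m)min(e/ρ_m,1) equals the explicit piecewise formula: V₁*(e) = g(ρ_m)·(e/ρ_m) for (g(ρ_{m-1})/g(ρ_m))ρ_m ≤ e < ρ_m, and V₁*(e) = g(ρ_m) for ρ_m ≤ e < (g(ρ_m)/g(ρ_{m+1}))ρ_{m+1} (with the convention g(ρ_0)=0 and ρ_{K+1}=∞). In particular V₁* is continuous, nondecreasing, and piecewise linear in e. -/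
/-! Each candidate `e ↦ g ρ * min (e / ρ) 1` is a ramp of slope `g ρ / ρ` levelling off at
height `g ρ` from `e = ρ` on. Strict concavity with `g 0 = 0` makes the slopes decrease while
monotonicity makes the heights increase in `ρ`. So for a given `e`, among the powers `ρ ≥ e` the
smallest one is best, and among the powers `ρ ≤ e` the largest one; the breakpoint
`(g ρ_m / g ρ_{m+1}) ρ_{m+1}` is where the plateau of `ρ_m` meets the ramp of `ρ_{m+1}`. -/

open Set

lemma StrictConcaveOn.mul_lt_mul_of_lt {g : ℝ → ℝ} (hconc : StrictConcaveOn ℝ (Ici 0) g)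
    (hg0 : g 0 = 0) {a b : ℝ} (ha : 0 < a) (hab : a < b) : g b * a < g a * b := by
  have hb : 0 < b := ha.trans hab
  have hslope := hconc.secant_strict_mono self_mem_Ici ha.le (mem_Ici.2 hb.le) ha.ne' hb.ne' hab
  simp only [hg0, sub_zero] at hslope
  rwa [div_lt_div_iff₀ hb ha] at hslope

lemma MonotoneOn.map_nonneg_of_map_zero {g : ℝ → ℝ} (hmono : MonotoneOn g (Ici 0))
    (hg0 : g 0 = 0) {x : ℝ} (hx : 0 ≤ x) : 0 ≤ g x :=
  hg0 ▸ hmono self_mem_Ici hx hx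

lemma StrictMonoOn.map_pos_of_map_zero {g : ℝ → ℝ} (hmono : StrictMonoOn g (Ici 0))
    (hg0 : g 0 = 0) {x : ℝ} (hx : 0 < x) : 0 < g x :=
  hg0 ▸ hmono self_mem_Ici hx.le hx

/-- The paper's `g_r(e, ρ)`. -/
noncomputable def throughput (g : ℝ → ℝ) (p e : ℝ) : ℝ := g p * min (e / p) 1

section throughput

variable {g : ℝ → ℝ} {p q e : ℝ}

lemma throughput_of_le (hp : 0 < p) (hpe : p ≤ e) : throughput g p e = g p := by
  rw [throughput, min_eq_right ((one_le_div hp).2 hpe), mul_one]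

lemma throughput_of_ge (hp : 0 < p) (hep : e ≤ p) : throughput g p e = g p * (e / p) := by
  rw [throughput, min_eq_left ((div_le_one hp).2 hep)]

lemma throughput_le (hg : 0 ≤ g p) : throughput g p e ≤ g p :=
  mul_le_of_le_one_right hg (min_le_right _ _)

lemma monotone_throughput (hp : 0 ≤ p) (hg : 0 ≤ g p) : Monotone (throughput g p) :=
  fun _ _ h => mul_le_mul_of_nonneg_left (min_le_min_right 1 (div_le_div_of_nonneg_right h hp)) hg

lemma continuous_throughput : Continuous (throughput g p) := by
  unfold throughput
  fun_prop

lemma throughput_le_throughput_of_le (hconc : StrictConcaveOn ℝ (Ici 0) g) (hg0 : g 0 = 0)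
    (hp : 0 < p) (hpq : p ≤ q) (he : 0 ≤ e) (hep : e ≤ p) :
    throughput g q e ≤ throughput g p e := by
  rcases hpq.eq_or_lt with rfl | hpq
  · rfl
  have hq := hp.trans hpq
  rw [throughput_of_ge hp hep, throughput_of_ge hq (hep.trans hpq.le), mul_div_assoc',
    mul_div_assoc', div_le_div_iff₀ hq hp]
  have := mul_le_mul_of_nonneg_left (hconc.mul_lt_mul_of_lt hg0 hp hpq).le he
  linarith

lemma throughput_le_of_le_breakpoint (hconc : StrictConcaveOn ℝ (Ici 0) g)
    (hmono : StrictMonoOn g (Ici 0)) (hg0 : g 0 = 0) {r : ℝ} (hp : 0 < p) (hpq : p < q)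
    (hqr : q ≤ r) (he : 0 ≤ e) (hbreak : e ≤ g p / g q * q) : throughput g r e ≤ g p := by
  have hq := hp.trans hpq
  have hgpq : g p < g q := hmono (mem_Ici.2 hp.le) (mem_Ici.2 hq.le) hpq
  have hgp : 0 < g p := hmono.map_pos_of_map_zero hg0 hp
  have heq : e ≤ q := hbreak.trans <|
    mul_le_of_le_one_left hq.le ((div_le_one (hgp.trans hgpq)).2 hgpq.le)
  rw [div_mul_eq_mul_div, le_div_iff₀ (hgp.trans hgpq)] at hbreak
  calc throughput g r e
      ≤ throughput g q e := throughput_le_throughput_of_le hconc hg0 hq hqr he heq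
    _ = g q * e / q := by rw [throughput_of_ge hq heq, mul_div_assoc]
    _ ≤ g p := by rw [div_le_iff₀ hq]; linarith

end throughput

section sup

variable {ι : Type*} {g : ℝ → ℝ} {s : Finset ι} {ρ : ι → ℝ} {m : ι} {e : ℝ}

lemma Finset.sup'_eq_of_forall_le {α : Type*} [SemilatticeSup α] (hs : s.Nonempty)
    {f : ι → α} (hm : m ∈ s) (h : ∀ j ∈ s, f j ≤ f m) : s.sup' hs f = f m :=
  le_antisymm (Finset.sup'_le hs f h) (Finset.le_sup' f hm)

lemma sup'_throughput_eq_of_lt (hconc : StrictConcaveOn ℝ (Ici 0) g)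
    (hmono : StrictMonoOn g (Ici 0)) (hg0 : g 0 = 0) (hs : s.Nonempty)
    (hpos : ∀ j ∈ s, 0 < ρ j) (hm : m ∈ s) {c : ℝ} (hc : 0 ≤ c)
    (hbelow : ∀ j ∈ s, ρ j < ρ m → g (ρ j) ≤ c) (hce : c / g (ρ m) * ρ m ≤ e)
    (hem : e < ρ m) :
    s.sup' hs (fun j => throughput g (ρ j) e) = g (ρ m) * (e / ρ m) := by
  have hgm : 0 < g (ρ m) := hmono.map_pos_of_map_zero hg0 (hpos m hm)
  have he : 0 ≤ e := le_trans (mul_nonneg (div_nonneg hc hgm.le) (hpos m hm).le) hce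
  rw [← throughput_of_ge (hpos m hm) hem.le]
  refine Finset.sup'_eq_of_forall_le hs hm fun j hj => ?_
  rcases lt_or_ge (ρ j) (ρ m) with hjm | hmj
  · calc throughput g (ρ j) e
        ≤ g (ρ j) := throughput_le (hmono.monotoneOn.map_nonneg_of_map_zero hg0 (hpos j hj).le)
      _ ≤ c := hbelow j hj hjm
      _ ≤ throughput g (ρ m) e := by
        rw [div_mul_eq_mul_div, div_le_iff₀ hgm] at hce
        rw [throughput_of_ge (hpos m hm) hem.le, mul_div_assoc', le_div_iff₀ (hpos m hm)]
        linarith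
  · exact throughput_le_throughput_of_le hconc hg0 (hpos m hm) hmj he hem.le

lemma sup'_throughput_eq_of_ge (hmono : MonotoneOn g (Ici 0)) (hg0 : g 0 = 0)
    (hs : s.Nonempty) (hpos : ∀ j ∈ s, 0 < ρ j) (hm : m ∈ s) (hme : ρ m ≤ e)
    (habove : ∀ j ∈ s, ρ m < ρ j → throughput g (ρ j) e ≤ g (ρ m)) :
    s.sup' hs (fun j => throughput g (ρ j) e) = g (ρ m) := by
  rw [← throughput_of_le (g := g) (hpos m hm) hme]
  refine Finset.sup'_eq_of_forall_le hs hm fun j hj => ?_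
  rw [throughput_of_le (hpos m hm) hme]
  rcases le_or_gt (ρ j) (ρ m) with hjm | hmj
  · exact (throughput_le (hmono.map_nonneg_of_map_zero hg0 (hpos j hj).le)).trans
      (hmono (mem_Ici.2 (hpos j hj).le) (mem_Ici.2 (hpos m hm).le) hjm)
  · exact habove j hj hmj

end sup

theorem stmt19 (g : ℝ → ℝ) (hconc : StrictConcaveOn ℝ (Set.Ici 0) g)
    (hmono : StrictMonoOn g (Set.Ici 0)) (hg0 : g 0 = 0)
    (K : ℕ) (hK : 1 ≤ K) (ρ : ℕ → ℝ) (hpos : ∀ m ∈ Finset.Icc 1 K, 0 < ρ m)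
    (hinc : ∀ m ∈ Finset.Icc 1 K, ∀ m' ∈ Finset.Icc 1 K, m < m' → ρ m < ρ m') :
    -- single-slot optimal value V₁*(e)
    let V1 : ℝ → ℝ := fun e =>
      (Finset.Icc 1 K).sup' (Finset.nonempty_Icc.mpr hK) fun m => g (ρ m) * min (e / ρ m) 1
    -- linear pieces: (g(ρ_{m-1})/g(ρ_m))ρ_m ≤ e < ρ_m (with the convention g(ρ₀)=0)
    (∀ m ∈ Finset.Icc 1 K, ∀ e : ℝ,
      (if m = 1 then 0 else g (ρ (m - 1))) / g (ρ m) * ρ m ≤ e → e < ρ m →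
      V1 e = g (ρ m) * (e / ρ m)) ∧
    -- flat pieces: ρ_m ≤ e < (g(ρ_m)/g(ρ_{m+1}))ρ_{m+1} (with ρ_{K+1} = ∞)
    (∀ m ∈ Finset.Icc 1 K, ∀ e : ℝ, ρ m ≤ e →
      (m < K → e < g (ρ m) / g (ρ (m + 1)) * ρ (m + 1) → V1 e = g (ρ m)) ∧
      (m = K → V1 e = g (ρ K))) ∧
    Continuous V1 ∧ MonotoneOn V1 (Set.Ici 0) := by
  intro V1
  have hne := Finset.nonempty_Icc.mpr hK
  have hρ : StrictMonoOn ρ (Finset.Icc 1 K : Set ℕ) := hinc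
  have hgρ : MonotoneOn (g ∘ ρ) (Finset.Icc 1 K : Set ℕ) :=
    (hmono.comp hρ fun m hm => mem_Ici.2 (hpos m hm).le).monotoneOn
  have hgρ_pos : ∀ m ∈ Finset.Icc 1 K, 0 ≤ g (ρ m) := fun m hm =>
    hmono.monotoneOn.map_nonneg_of_map_zero hg0 (hpos m hm).le
  refine ⟨fun m hm e hce hem => ?_, fun m hm e hme => ⟨fun hmK hbreak => ?_, fun hmK => ?_⟩,
    Continuous.finset_sup'_apply hne fun _ _ => continuous_throughput,
    fun a _ b _ hab => Finset.sup'_mono_fun fun j hj =>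
      monotone_throughput (hpos j hj).le (hgρ_pos j hj) hab⟩
  · obtain ⟨hm1, hmK⟩ := Finset.mem_Icc.1 hm
    refine sup'_throughput_eq_of_lt hconc hmono hg0 hne hpos hm ?_ (fun j hj hjm => ?_) hce hem
    · split_ifs
      exacts [le_rfl, hgρ_pos _ (Finset.mem_Icc.2 ⟨by omega, by omega⟩)]
    · have hjm := (hρ.lt_iff_lt hj hm).1 hjm
      have hj1 := (Finset.mem_Icc.1 hj).1
      rw [if_neg (by omega)]
      exact hgρ hj (Finset.mem_Icc.2 ⟨by omega, by omega⟩) (by omega)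
  · have hm1 : m + 1 ∈ Finset.Icc 1 K := Finset.mem_Icc.2 ⟨by omega, hmK⟩
    refine sup'_throughput_eq_of_ge hmono.monotoneOn hg0 hne hpos hm hme fun j hj hmj => ?_
    have hmj := (hρ.lt_iff_lt hm hj).1 hmj
    exact throughput_le_of_le_breakpoint hconc hmono hg0 (hpos m hm)
      (hρ hm hm1 (Nat.lt_succ_self m)) ((hρ.le_iff_le hm1 hj).2 hmj) ((hpos m hm).le.trans hme)
      hbreak.le
  · subst hmK
    refine sup'_throughput_eq_of_ge hmono.monotoneOn hg0 hne hpos hm hme fun j hj hmj => ?_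
    exact absurd ((hρ.lt_iff_lt hm hj).1 hmj) (Finset.mem_Icc.1 hj).2.not_gt
end
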